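/- Let α = (1/(2N)) g⁻² y₁² ∈ R. Then the singular multiplication satisfies μ(α ⊗ α) = α ⊗ α ⊗ 1 + (1/N) (g⁻¹y₁) ⊗ (g⁻¹y₁) ⊗ t⁻² + (1/2)·1 ⊗ 1 ⊗ t⁻⁴ in R ⊗_ℂ R ⊗_ℂ ℂ[t,t⁻¹]. (This is Step 1 of the proof that Borcherds's functor Φ from (A,H,S_B)-vertex algebras to vertex algebras is not an equivalence: the computation of μ_{V^L}(α ⊗ α), where α is the image of the conformal vector ω₀ = ½b₋₁²|0⟩ of the rank-one lattice vertex algebra V_L.) -/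

import Mathlib

open TensorProduct

noncomputable section

/-- `Rb` is the commutative `ℂ`-algebra `ℂ[g,g⁻¹] ⊗ ℂ[y₁,y₂,…]`, realized as Laurent
polynomials in one variable with coefficients in a polynomial ring in countably many
variables.  It is the underlying algebra of Borcherds's rank-one lattice bialgebra `V^L`. -/
abbrev Rb : Type := LaurentPolynomial (MvPolynomial ℕ ℂ)

/-- `Lt` is the Laurent polynomial ring `ℂ[t,t⁻¹]`. -/
abbrev Lt : Type := LaurentPolynomial ℂ

/-- `gp n` is the element `gⁿ` of `Rb`. -/
def gp (n : ℤ) : Rb := LaurentPolynomial.T n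

/-- `yv k` is the variable `y_k` of `Rb` (only `k ≥ 1` is used). -/
def yv (k : ℕ) : Rb := LaurentPolynomial.C (MvPolynomial.X k)

/-- `tp n` is the element `tⁿ` of `ℂ[t,t⁻¹]`. -/
def tp (n : ℤ) : Lt := LaurentPolynomial.T n

/-- The singular multiplication `μ : R ⊗ R → R ⊗ R ⊗ ℂ[t,t⁻¹]`, given on `v ⊗ w` by
`μ(v ⊗ w) = Σ (v₍₁₎ ⊗ w₍₁₎) ⊗ r(v₍₂₎, w₍₂₎)` where `Δ(v) = Σ v₍₁₎ ⊗ v₍₂₎` and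
`Δ(w) = Σ w₍₁₎ ⊗ w₍₂₎` in Sweedler notation. -/
def muMap (Δ : Rb →ₐ[ℂ] Rb ⊗[ℂ] Rb) (r : Rb →ₗ[ℂ] Rb →ₗ[ℂ] Lt) :
    Rb ⊗[ℂ] Rb →ₗ[ℂ] Rb ⊗[ℂ] (Rb ⊗[ℂ] Lt) :=
  (TensorProduct.assoc ℂ Rb Rb Lt).toLinearMap
    ∘ₗ TensorProduct.map LinearMap.id (TensorProduct.lift r)
    ∘ₗ (TensorProduct.tensorTensorTensorComm ℂ Rb Rb Rb Rb).toLinearMap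
    ∘ₗ TensorProduct.map Δ.toLinearMap Δ.toLinearMap

/-!
The element `β = g⁻¹y₁` is primitive, `Δ β = β ⊗ 1 + 1 ⊗ β`, and `α = β² / (2N)`. Expanding
`Δ(β²) = β² ⊗ 1 + 2 β ⊗ β + 1 ⊗ β²` in both tensor factors, the multiplicativity (B4) and the
symmetry (B2) of `r` kill every term except those carrying `r(1,1) = 1`, `r(β,β)` and
`r(β²,β²) = 2 r(β,β)²`, because `r(β,1) = r(g⁻¹,1) r(Dg,1) = d(1) = 0`. Finally
`r(β,β) = r(y₁,β) = d(r(g,β))`, and `r(g,β) = ι(r(β,g)) = ι(r(g⁻¹,g) · d(r(g,g))) = ι(N t⁻¹) = -N t⁻¹`,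
so `r(β,β) = N t⁻²`.
-/
namespace Pairing

open Algebra.TensorProduct

variable {k A L : Type*} [CommRing k] [CommRing A] [Algebra k A] [CommRing L] [Algebra k L]
  {Δ : A →ₐ[k] A ⊗[k] A} {r : A →ₗ[k] A →ₗ[k] L}

theorem mul_left_of_grouplike
    (hr : ∀ v₁ v₂ w, r (v₁ * v₂) w = lift ((LinearMap.mul k L).compl₁₂ (r v₁) (r v₂)) (Δ w))
    {w : A} (hw : Δ w = w ⊗ₜ w) (v₁ v₂ : A) : r (v₁ * v₂) w = r v₁ w * r v₂ w := by
  simp [hr, hw]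

theorem mul_left_of_primitive
    (hr : ∀ v₁ v₂ w, r (v₁ * v₂) w = lift ((LinearMap.mul k L).compl₁₂ (r v₁) (r v₂)) (Δ w))
    {w : A} (hw : Δ w = w ⊗ₜ 1 + 1 ⊗ₜ w) (v₁ v₂ : A) :
    r (v₁ * v₂) w = r v₁ w * r v₂ 1 + r v₁ 1 * r v₂ w := by
  simp [hr, hw]

theorem comul_mul_self_of_primitive {b : A} (hb : Δ b = b ⊗ₜ 1 + 1 ⊗ₜ b) :
    Δ (b * b) = (b * b) ⊗ₜ 1 + (2 : k) • (b ⊗ₜ b) + 1 ⊗ₜ (b * b) := by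
  rw [map_mul, hb]
  simp only [add_mul, mul_add, tmul_mul_tmul, one_mul, mul_one]
  module

theorem mul_self_mul_self_of_primitive
    (hr : ∀ v₁ v₂ w, r (v₁ * v₂) w = lift ((LinearMap.mul k L).compl₁₂ (r v₁) (r v₂)) (Δ w))
    {b : A} (hb : Δ b = b ⊗ₜ 1 + 1 ⊗ₜ b) (hb1 : r b 1 = 0) :
    r (b * b) (b * b) = (2 : k) • r b b ^ 2 := by
  simp [hr, comul_mul_self_of_primitive hb, hb1, sq]

end Pairing

theorem muMap_mul_self_tmul_mul_self_of_primitive {Δ : Rb →ₐ[ℂ] Rb ⊗[ℂ] Rb}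
    {r : Rb →ₗ[ℂ] Rb →ₗ[ℂ] Lt} (ι : Lt →+ Lt) (hsymm : ∀ v w, r w v = ι (r v w))
    (hr : ∀ v₁ v₂ w, r (v₁ * v₂) w = lift ((LinearMap.mul ℂ Lt).compl₁₂ (r v₁) (r v₂)) (Δ w))
    (h11 : r 1 1 = 1) {b : Rb} (hb : Δ b = b ⊗ₜ 1 + 1 ⊗ₜ b) (hb1 : r b 1 = 0) :
    muMap Δ r ((b * b) ⊗ₜ (b * b)) = (b * b) ⊗ₜ ((b * b) ⊗ₜ 1)
      + (4 : ℂ) • (b ⊗ₜ (b ⊗ₜ r b b)) + (2 : ℂ) • ((1 : Rb) ⊗ₜ ((1 : Rb) ⊗ₜ (r b b ^ 2))) := by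
  have hΔ1 : Δ 1 = 1 ⊗ₜ 1 := map_one Δ
  have hbb1 : r (b * b) 1 = 0 := by
    rw [Pairing.mul_left_of_grouplike hr hΔ1, hb1, mul_zero]
  have hbbb : r (b * b) b = 0 := by
    rw [Pairing.mul_left_of_primitive hr hb, hb1, mul_zero, zero_mul, add_zero]
  have hswap : ∀ {v w}, r v w = 0 → r w v = 0 := fun h => by rw [hsymm, h, map_zero]
  simp only [muMap, LinearMap.coe_comp, Function.comp_apply, TensorProduct.map_tmul,
    AlgHom.toLinearMap_apply, Pairing.comul_mul_self_of_primitive hb, LinearEquiv.coe_coe,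
    TensorProduct.tmul_add, TensorProduct.add_tmul, TensorProduct.smul_tmul, TensorProduct.tmul_smul,
    map_add, map_smul, TensorProduct.tensorTensorTensorComm_tmul, LinearMap.id_coe, id_eq,
    TensorProduct.lift.tmul, TensorProduct.assoc_tmul, h11, hb1, hbb1, hbbb, hswap hb1, hswap hbb1,
    hswap hbbb, Pairing.mul_self_mul_self_of_primitive hr hb hb1, TensorProduct.tmul_zero,
    smul_zero, add_zero, zero_add]
  module

namespace LaurentPolynomial

theorem map_T_neg_one_of_map_T_one {R F : Type*} [CommRing R] [FunLike F R[T;T⁻¹] R[T;T⁻¹]]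
    [RingHomClass F R[T;T⁻¹] R[T;T⁻¹]] (f : F) (h : f (T 1) = -T 1) : f (T (-1)) = -T (-1) := by
  refine left_inv_eq_right_inv (a := -T 1) ?_ ?_
  · rw [← h, ← map_mul, ← T_add]
    simp
  · rw [neg_mul_neg, ← T_add]
    simp

end LaurentPolynomial

theorem gp_mul_gp (a b : ℤ) : gp a * gp b = gp (a + b) := (LaurentPolynomial.T_add a b).symm

theorem tp_mul_tp (a b : ℤ) : tp a * tp b = tp (a + b) := (LaurentPolynomial.T_add a b).symm

theorem gp_zero : gp 0 = 1 := LaurentPolynomial.T_zero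

theorem tp_zero : tp 0 = 1 := LaurentPolynomial.T_zero

section Lattice

variable {N : ℕ} {D : Derivation ℂ Rb Rb} {Δ : Rb →ₐ[ℂ] Rb ⊗[ℂ] Rb} {d : Derivation ℂ Lt Lt}
  {r : Rb →ₗ[ℂ] Rb →ₗ[ℂ] Lt}

theorem comul_yv_one (hDg : D (gp 1) = yv 1) (hΔg : ∀ n : ℤ, Δ (gp n) = gp n ⊗ₜ[ℂ] gp n)
    (hΔD : ∀ v : Rb, Δ (D v) =
      (TensorProduct.map D.toLinearMap LinearMap.id
        + TensorProduct.map LinearMap.id D.toLinearMap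
        : Rb ⊗[ℂ] Rb →ₗ[ℂ] Rb ⊗[ℂ] Rb) (Δ v)) :
    Δ (yv 1) = yv 1 ⊗ₜ gp 1 + gp 1 ⊗ₜ yv 1 := by
  simpa [hDg, hΔg 1] using hΔD (gp 1)

theorem comul_gp_neg_one_mul_yv_one (hΔg : ∀ n : ℤ, Δ (gp n) = gp n ⊗ₜ[ℂ] gp n)
    (hΔy : Δ (yv 1) = yv 1 ⊗ₜ gp 1 + gp 1 ⊗ₜ yv 1) :
    Δ (gp (-1) * yv 1) = (gp (-1) * yv 1) ⊗ₜ 1 + 1 ⊗ₜ (gp (-1) * yv 1) := by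
  have hinv : gp (-1) * gp 1 = 1 := by rw [gp_mul_gp]; exact gp_zero
  rw [map_mul, hΔg, hΔy, mul_add]
  simp only [Algebra.TensorProduct.tmul_mul_tmul, hinv]

theorem pairing_gp_one (hB1 : ∀ n m : ℤ, r (gp n) (gp m) = tp (n * m * (N : ℤ))) (n : ℤ) :
    r (gp n) 1 = 1 := by
  simpa [gp_zero, tp_zero] using hB1 n 0

theorem pairing_yv_one_one (hDg : D (gp 1) = yv 1)
    (hB1 : ∀ n m : ℤ, r (gp n) (gp m) = tp (n * m * (N : ℤ)))
    (hB3 : ∀ v w : Rb, r (D v) w = d (r v w)) : r (yv 1) 1 = 0 := by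
  rw [← hDg, hB3, pairing_gp_one hB1, Derivation.map_one_eq_zero]

theorem pairing_yv_one_gp_one (hDg : D (gp 1) = yv 1)
    (hd : ∀ n : ℤ, d (tp n) = (n : ℂ) • tp (n - 1))
    (hB1 : ∀ n m : ℤ, r (gp n) (gp m) = tp (n * m * (N : ℤ)))
    (hB3 : ∀ v w : Rb, r (D v) w = d (r v w)) : r (yv 1) (gp 1) = (N : ℂ) • tp (N - 1) := by
  rw [← hDg, hB3, hB1, hd]
  simp

theorem pairing_gp_neg_one_mul_yv_one_self (hDg : D (gp 1) = yv 1)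
    (hΔg : ∀ n : ℤ, Δ (gp n) = gp n ⊗ₜ[ℂ] gp n)
    (hβ : Δ (gp (-1) * yv 1) = (gp (-1) * yv 1) ⊗ₜ 1 + 1 ⊗ₜ (gp (-1) * yv 1))
    (hd : ∀ n : ℤ, d (tp n) = (n : ℂ) • tp (n - 1))
    (ι : Lt ≃ₐ[ℂ] Lt) (hι : ι (tp 1) = - tp 1)
    (hB1 : ∀ n m : ℤ, r (gp n) (gp m) = tp (n * m * (N : ℤ)))
    (hB2 : ∀ v w : Rb, r w v = ι (r v w))
    (hB3 : ∀ v w : Rb, r (D v) w = d (r v w))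
    (hB4 : ∀ v₁ v₂ w : Rb, r (v₁ * v₂) w =
      TensorProduct.lift ((LinearMap.mul ℂ Lt).compl₁₂ (r v₁) (r v₂)) (Δ w)) :
    r (gp (-1) * yv 1) (gp (-1) * yv 1) = (N : ℂ) • tp (-2) := by
  have hβg : r (gp (-1) * yv 1) (gp 1) = (N : ℂ) • tp (-1) := by
    rw [Pairing.mul_left_of_grouplike hB4 (hΔg 1), hB1, pairing_yv_one_gp_one hDg hd hB1 hB3,
      mul_smul_comm, tp_mul_tp]
    congr 2
    ring
  have hgβ : r (gp 1) (gp (-1) * yv 1) = -((N : ℂ) • tp (-1)) := by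
    rw [hB2, hβg, map_smul, ← smul_neg]
    exact congrArg _ (LaurentPolynomial.map_T_neg_one_of_map_T_one ι hι)
  have hyβ : r (yv 1) (gp (-1) * yv 1) = d (r (gp 1) (gp (-1) * yv 1)) := by rw [← hB3, hDg]
  rw [Pairing.mul_left_of_primitive hB4 hβ, pairing_yv_one_one hDg hB1 hB3, mul_zero, zero_add,
    pairing_gp_one hB1, one_mul, hyβ, hgβ, map_neg, Derivation.map_smul, hd]
  norm_num

end Lattice

theorem singular_multiplication_of_conformal_vector_general
    (N : ℕ) (hNpos : 0 < N)
    (D : Derivation ℂ Rb Rb) (hDg : D (gp 1) = yv 1)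
    (Δ : Rb →ₐ[ℂ] Rb ⊗[ℂ] Rb)
    (hΔg : ∀ n : ℤ, Δ (gp n) = gp n ⊗ₜ[ℂ] gp n)
    (hΔD : ∀ v : Rb, Δ (D v) =
      (TensorProduct.map D.toLinearMap LinearMap.id
        + TensorProduct.map LinearMap.id D.toLinearMap
        : Rb ⊗[ℂ] Rb →ₗ[ℂ] Rb ⊗[ℂ] Rb) (Δ v))
    (d : Derivation ℂ Lt Lt) (hd : ∀ n : ℤ, d (tp n) = (n : ℂ) • tp (n - 1))
    (ι : Lt ≃ₐ[ℂ] Lt) (hι : ι (tp 1) = - tp 1)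
    (r : Rb →ₗ[ℂ] Rb →ₗ[ℂ] Lt)
    (hB1 : ∀ n m : ℤ, r (gp n) (gp m) = tp (n * m * (N : ℤ)))
    (hB2 : ∀ v w : Rb, r w v = ι (r v w))
    (hB3 : ∀ v w : Rb, r (D v) w = d (r v w))
    (hB4 : ∀ v₁ v₂ w : Rb, r (v₁ * v₂) w =
      TensorProduct.lift ((LinearMap.mul ℂ Lt).compl₁₂ (r v₁) (r v₂)) (Δ w))
    (α : Rb) (hα : α = ((1 : ℂ) / (2 * N)) • (gp (-2) * yv 1 ^ 2)) :
    muMap Δ r (α ⊗ₜ[ℂ] α)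
      = α ⊗ₜ[ℂ] (α ⊗ₜ[ℂ] 1)
        + ((1 : ℂ) / N) •
            ((gp (-1) * yv 1) ⊗ₜ[ℂ] ((gp (-1) * yv 1) ⊗ₜ[ℂ] tp (-2)))
        + ((1 : ℂ) / 2) • ((1 : Rb) ⊗ₜ[ℂ] ((1 : Rb) ⊗ₜ[ℂ] tp (-4))) := by
  have hβ := comul_gp_neg_one_mul_yv_one hΔg (comul_yv_one hDg hΔg hΔD)
  have hβ1 : r (gp (-1) * yv 1) 1 = 0 := by
    rw [Pairing.mul_left_of_grouplike hB4 (map_one Δ), pairing_yv_one_one hDg hB1 hB3, mul_zero]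
  have h11 : r 1 1 = 1 := by simpa [gp_zero] using pairing_gp_one hB1 0
  have hα' : α = ((1 : ℂ) / (2 * N)) • ((gp (-1) * yv 1) * (gp (-1) * yv 1)) := by
    rw [hα, mul_mul_mul_comm, gp_mul_gp, sq]
    norm_num
  have hN : (N : ℂ) ≠ 0 := Nat.cast_ne_zero.mpr hNpos.ne'
  rw [hα', TensorProduct.smul_tmul_smul, map_smul,
    muMap_mul_self_tmul_mul_self_of_primitive ι.toAddMonoidHom hB2 hB4 h11 hβ hβ1,
    pairing_gp_neg_one_mul_yv_one_self hDg hΔg hβ hd ι hι hB1 hB2 hB3 hB4]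
  simp only [sq, smul_mul_smul_comm, tp_mul_tp, TensorProduct.tmul_smul,
    ← TensorProduct.smul_tmul', smul_add, smul_smul, show (-2 : ℤ) + -2 = -4 by norm_num]
  match_scalars <;> field_simp
  norm_num

/-- For `α = (1/(2N)) g⁻² y₁²`, the singular multiplication satisfies
`μ(α ⊗ α) = α ⊗ α ⊗ 1 + (1/N)(g⁻¹y₁) ⊗ (g⁻¹y₁) ⊗ t⁻² + (1/2)·1 ⊗ 1 ⊗ t⁻⁴`. -/
theorem singular_multiplication_of_conformal_vector
    (N : ℕ) (hNpos : 0 < N) (hNeven : Even N)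
    (D : Derivation ℂ Rb Rb) (hDg : D (gp 1) = yv 1)
    (hDy : ∀ k : ℕ, 1 ≤ k → D (yv k) = ((k : ℂ) + 1) • yv (k + 1))
    (Δ : Rb →ₐ[ℂ] Rb ⊗[ℂ] Rb)
    (hΔg : ∀ n : ℤ, Δ (gp n) = gp n ⊗ₜ[ℂ] gp n)
    (hΔD : ∀ v : Rb, Δ (D v) =
      (TensorProduct.map D.toLinearMap LinearMap.id
        + TensorProduct.map LinearMap.id D.toLinearMap
        : Rb ⊗[ℂ] Rb →ₗ[ℂ] Rb ⊗[ℂ] Rb) (Δ v))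
    (d : Derivation ℂ Lt Lt) (hd : ∀ n : ℤ, d (tp n) = (n : ℂ) • tp (n - 1))
    (ι : Lt ≃ₐ[ℂ] Lt) (hι : ι (tp 1) = - tp 1)
    (r : Rb →ₗ[ℂ] Rb →ₗ[ℂ] Lt)
    (hB1 : ∀ n m : ℤ, r (gp n) (gp m) = tp (n * m * (N : ℤ)))
    (hB2 : ∀ v w : Rb, r w v = ι (r v w))
    (hB3 : ∀ v w : Rb, r (D v) w = d (r v w))
    (hB4 : ∀ v₁ v₂ w : Rb, r (v₁ * v₂) w =
      TensorProduct.lift ((LinearMap.mul ℂ Lt).compl₁₂ (r v₁) (r v₂)) (Δ w))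
    (α : Rb) (hα : α = ((1 : ℂ) / (2 * N)) • (gp (-2) * yv 1 ^ 2)) :
    muMap Δ r (α ⊗ₜ[ℂ] α)
      = α ⊗ₜ[ℂ] (α ⊗ₜ[ℂ] 1)
        + ((1 : ℂ) / N) •
            ((gp (-1) * yv 1) ⊗ₜ[ℂ] ((gp (-1) * yv 1) ⊗ₜ[ℂ] tp (-2)))
        + ((1 : ℂ) / 2) • ((1 : Rb) ⊗ₜ[ℂ] ((1 : Rb) ⊗ₜ[ℂ] tp (-4))) :=
  singular_multiplication_of_conformal_vector_general N hNpos D hDg Δ hΔg hΔD d hd ι hι r hB1 hB2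
    hB3 hB4 α hα
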